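/- For every n ≥ 2, the cover graph G(L(Π_n)) of the face lattice of the permutahedron has a Hamiltonian cycle. -/

import Mathlib

/-!
The cover graph of the face lattice of the permutahedron `Π_n`.
Vertices are ordered set partitions of `[n]` (modeled as `Fin n`), plus an extra
vertex `none` playing the role of the empty face `⊥`.
-/

/-- `P` is an ordered set partition of `[n]`: a list of nonempty pairwise disjoint
subsets of `Fin n` whose union is all of `Fin n`. -/
def IsOSP (n : ℕ) (P : List (Finset (Fin n))) : Prop :=
  (∀ B ∈ P, B.Nonempty) ∧ P.Pairwise Disjoint ∧ ∀ x : Fin n, ∃ B ∈ P, x ∈ B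

/-- `Q` is obtained from `P` by merging two consecutive blocks into a single block,
keeping all other blocks unchanged. -/
def MergeStep {n : ℕ} (P Q : List (Finset (Fin n))) : Prop :=
  ∃ (L : List (Finset (Fin n))) (A B : Finset (Fin n)) (R : List (Finset (Fin n))),
    P = L ++ A :: B :: R ∧ Q = L ++ (A ∪ B) :: R

/-- Base relation of the cover graph of `L(Π_n)`: two ordered set partitions are related
if one is obtained from the other by merging two consecutive blocks; the empty face
`none` is related to exactly the partitions into singleton blocks (permutations). -/
def permFaceRel (n : ℕ) (u v : Option {P : List (Finset (Fin n)) // IsOSP n P}) : Prop :=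
  match u, v with
  | some P, some Q => MergeStep P.val Q.val
  | none, some P => ∀ B ∈ P.val, B.card = 1
  | _, _ => False

/-- The cover graph `G(L(Π_n))` of the face lattice of the permutahedron. -/
def permFaceGraph (n : ℕ) : SimpleGraph (Option {P : List (Finset (Fin n)) // IsOSP n P}) :=
  SimpleGraph.fromRel (permFaceRel n)

/-!
Every ordered set partition of `insert x S` arises from exactly one ordered set partition `P`
of `S` by inserting `x`, either as a new singleton block or into an existing block of `P`.
For fixed `P` the `2 |P| + 1` insertions form a path of merge steps from `{x} :: P` to
`P ++ [{x}]`. Traversing these paths alternately forwards and backwards along a Hamiltonian path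
of the merge graph on the ordered set partitions of `S` gives one for `insert x S`: adjacent
partitions stay adjacent after adding the block `{x}` at the same end. The ends of the path
remain permutations, so the empty face `⊥` closes it into a Hamiltonian cycle.
-/

namespace SimpleGraph

variable {V : Type*} [DecidableEq V] {G : SimpleGraph V}

lemma Walk.isHamiltonian_ofSupport {l : List V} (hne : l ≠ []) (hchain : l.IsChain G.Adj)
    (hnd : l.Nodup) (hmem : ∀ v, v ∈ l) : (Walk.ofSupport l hne hchain).IsHamiltonian := by
  intro v
  rw [support_ofSupport]
  exact List.count_eq_one_of_mem hnd (hmem v)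

lemma Walk.IsHamiltonian.isHamiltonianCycle_cons {u v : V} {p : G.Walk u v}
    (hp : p.IsHamiltonian) (h : G.Adj v u) (hlen : 2 ≤ p.length) :
    (Walk.cons h p).IsHamiltonianCycle where
  toIsCycle := isCycle_iff_isPath_tail_and_le_length.mpr
    ⟨by simpa using hp.isPath, by simp only [length_cons]; omega⟩
  isHamiltonian_tail := by simpa [IsHamiltonian] using hp

theorem exists_isHamiltonianCycle_of_isChain {l : List V} (hne : l ≠ [])
    (hchain : l.IsChain G.Adj) (hclose : G.Adj (l.getLast hne) (l.head hne)) (hnd : l.Nodup)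
    (hmem : ∀ v, v ∈ l) (hlen : 3 ≤ l.length) :
    ∃ (v : V) (c : G.Walk v v), c.IsHamiltonianCycle :=
  ⟨_, _, (Walk.isHamiltonian_ofSupport hne hchain hnd hmem).isHamiltonianCycle_cons hclose
    (by rw [Walk.length_ofSupport]; omega)⟩

end SimpleGraph

namespace OrderedSetPartition

variable {α : Type*} {S : Finset α} {P Q : List (Finset α)} {x : α} {b : Bool}
  {ps : List (List (Finset α))}

structure IsOSPOn (S : Finset α) (P : List (Finset α)) : Prop where
  nonempty : ∀ B ∈ P, B.Nonempty
  pairwise_disjoint : P.Pairwise Disjoint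
  mem_iff : ∀ y, y ∈ S ↔ ∃ B ∈ P, y ∈ B

lemma isOSPOn_univ_iff {n : ℕ} {P : List (Finset (Fin n))} :
    IsOSPOn Finset.univ P ↔ IsOSP n P :=
  ⟨fun h => ⟨h.nonempty, h.pairwise_disjoint, fun y => (h.mem_iff y).1 (Finset.mem_univ y)⟩,
    fun h => ⟨h.1, h.2.1, fun y => by simpa using h.2.2 y⟩⟩

lemma IsOSPOn.notMem (h : IsOSPOn S P) {x : α} (hx : x ∉ S) {B : Finset α} (hB : B ∈ P) :
    x ∉ B :=
  fun hxB => hx ((h.mem_iff x).2 ⟨B, hB, hxB⟩)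

lemma IsOSPOn.perm (h : IsOSPOn S P) (hPQ : P.Perm Q) : IsOSPOn S Q where
  nonempty B hB := h.nonempty B (hPQ.mem_iff.2 hB)
  pairwise_disjoint := hPQ.pairwise h.pairwise_disjoint fun h => h.symm
  mem_iff y := by simp only [h.mem_iff, hPQ.mem_iff]

lemma isOSPOn_empty_iff : IsOSPOn ∅ P ↔ P = [] := by
  refine ⟨fun h => ?_, fun h => ⟨by simp [h], by simp [h], by simp [h]⟩⟩
  cases P with
  | nil => rfl
  | cons B P =>
    obtain ⟨y, hy⟩ := h.nonempty B List.mem_cons_self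
    simpa using (h.mem_iff y).2 ⟨B, List.mem_cons_self, hy⟩

def addEndBlock (x : α) (b : Bool) (P : List (Finset α)) : List (Finset α) :=
  if b then {x} :: P else P ++ [{x}]

def IsPermutation (P : List (Finset α)) : Prop := ∀ B ∈ P, B.card = 1

lemma IsPermutation.addEndBlock (h : IsPermutation P) : IsPermutation (addEndBlock x b P) := by
  cases b <;> simpa [IsPermutation, OrderedSetPartition.addEndBlock, or_imp, forall_and] using h

variable [DecidableEq α]

lemma isOSPOn_cons_iff {C : Finset α} :
    IsOSPOn S (C :: P) ↔ C.Nonempty ∧ C ⊆ S ∧ IsOSPOn (S \ C) P := by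
  constructor
  · intro h
    have hdisj := List.pairwise_cons.1 h.pairwise_disjoint
    refine ⟨h.nonempty C List.mem_cons_self,
      fun y hy => (h.mem_iff y).2 ⟨C, List.mem_cons_self, hy⟩,
      fun B hB => h.nonempty B (List.mem_cons_of_mem C hB), hdisj.2, fun y => ?_⟩
    rw [Finset.mem_sdiff, h.mem_iff]
    constructor
    · rintro ⟨⟨B, hB, hyB⟩, hyC⟩
      rcases List.mem_cons.1 hB with rfl | hB
      · exact absurd hyB hyC
      · exact ⟨B, hB, hyB⟩
    · rintro ⟨B, hB, hyB⟩
      exact ⟨⟨B, List.mem_cons_of_mem C hB, hyB⟩,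
        fun hyC => Finset.disjoint_left.1 (hdisj.1 B hB) hyC hyB⟩
  · rintro ⟨hC, hCS, hP⟩
    refine ⟨?_, List.pairwise_cons.2 ⟨fun B hB => ?_, hP.pairwise_disjoint⟩, fun y => ?_⟩
    · simpa [hC] using hP.nonempty
    · exact Finset.disjoint_left.2 fun y hyC hyB =>
        (Finset.mem_sdiff.1 ((hP.mem_iff y).2 ⟨B, hB, hyB⟩)).2 hyC
    · by_cases hyC : y ∈ C
      · exact ⟨fun _ => ⟨C, List.mem_cons_self, hyC⟩, fun _ => hCS hyC⟩
      · simp [← hP.mem_iff, hyC]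

lemma isOSPOn_append_cons_iff {L R : List (Finset α)} {C : Finset α} :
    IsOSPOn S (L ++ C :: R) ↔ C.Nonempty ∧ C ⊆ S ∧ IsOSPOn (S \ C) (L ++ R) :=
  ⟨fun h => isOSPOn_cons_iff.1 (h.perm List.perm_middle),
    fun h => (isOSPOn_cons_iff.2 h).perm List.perm_middle.symm⟩

def IsInsertion (x : α) (P Q : List (Finset α)) : Prop :=
  (∃ L R, P = L ++ R ∧ Q = L ++ {x} :: R) ∨
    ∃ L C R, P = L ++ C :: R ∧ Q = L ++ insert x C :: R

lemma isOSPOn_insert_iff (hx : x ∉ S) :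
    IsOSPOn (insert x S) Q ↔ ∃ P, IsOSPOn S P ∧ IsInsertion x P Q := by
  constructor
  · intro hQ
    obtain ⟨C, hC, hxC⟩ := (hQ.mem_iff x).1 (Finset.mem_insert_self x S)
    obtain ⟨L, R, rfl⟩ := List.append_of_mem hC
    obtain ⟨-, hCS, hLR⟩ := isOSPOn_append_cons_iff.1 hQ
    by_cases hC1 : C = {x}
    · subst hC1
      refine ⟨L ++ R, ?_, Or.inl ⟨L, R, rfl, rfl⟩⟩
      rwa [Finset.sdiff_singleton_eq_erase, Finset.erase_insert hx] at hLR
    · refine ⟨L ++ C.erase x :: R, isOSPOn_append_cons_iff.2 ⟨?_, ?_, ?_⟩,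
        Or.inr ⟨L, C.erase x, R, rfl, by rw [Finset.insert_erase hxC]⟩⟩
      · exact ((Finset.nontrivial_iff_ne_singleton hxC).2 hC1).erase_nonempty
      · grind
      · convert hLR using 1
        grind
  · rintro ⟨P, hP, ⟨L, R, rfl, rfl⟩ | ⟨L, C, R, rfl, rfl⟩⟩
    · refine isOSPOn_append_cons_iff.2 ⟨Finset.singleton_nonempty x, ?_, ?_⟩
      · simp
      · rwa [Finset.sdiff_singleton_eq_erase, Finset.erase_insert hx]
    · obtain ⟨-, hCS, hLR⟩ := isOSPOn_append_cons_iff.1 hP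
      exact isOSPOn_append_cons_iff.2 ⟨Finset.insert_nonempty x C,
        Finset.insert_subset_insert x hCS,
        by rwa [Finset.insert_sdiff_insert, Finset.sdiff_insert_of_notMem hx]⟩

lemma isInsertion_nil_iff : IsInsertion x [] Q ↔ Q = [{x}] := by
  simp [IsInsertion]

lemma isInsertion_cons_iff {B : Finset α} :
    IsInsertion x (B :: P) Q ↔
      Q = {x} :: B :: P ∨ Q = insert x B :: P ∨ ∃ Q', IsInsertion x P Q' ∧ Q = B :: Q' := by
  simp only [IsInsertion, List.cons_eq_append_iff]
  constructor
  · rintro (⟨L, R, ⟨rfl, rfl⟩ | ⟨L', rfl, rfl⟩, rfl⟩ |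
      ⟨L, C, R, ⟨rfl, hC⟩ | ⟨L', rfl, rfl⟩, rfl⟩)
    · exact .inl rfl
    · exact .inr (.inr ⟨_, .inl ⟨L', R, rfl, rfl⟩, rfl⟩)
    · obtain ⟨rfl, rfl⟩ := List.cons.inj hC
      exact .inr (.inl rfl)
    · exact .inr (.inr ⟨_, .inr ⟨L', C, R, rfl, rfl⟩, rfl⟩)
  · rintro (rfl | rfl | ⟨Q', ⟨L, R, rfl, rfl⟩ | ⟨L, C, R, rfl, rfl⟩, rfl⟩)
    · exact .inl ⟨[], B :: P, .inl ⟨rfl, rfl⟩, rfl⟩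
    · exact .inr ⟨[], B, P, .inl ⟨rfl, rfl⟩, rfl⟩
    · exact .inl ⟨B :: L, R, .inr ⟨L, rfl, rfl⟩, rfl⟩
    · exact .inr ⟨B :: L, C, R, .inr ⟨L, rfl, rfl⟩, rfl⟩

def insertPath (x : α) : List (Finset α) → List (List (Finset α))
  | [] => [[{x}]]
  | B :: R => ({x} :: B :: R) :: (insert x B :: R) :: (insertPath x R).map (B :: ·)

lemma mem_insertPath : Q ∈ insertPath x P ↔ IsInsertion x P Q := by
  induction P generalizing Q with
  | nil => simp [insertPath, isInsertion_nil_iff]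
  | cons B R ih => simp [insertPath, isInsertion_cons_iff, ih, eq_comm]

lemma insertPath_ne_nil : insertPath x P ≠ [] := by
  cases P <;> simp [insertPath]

lemma head?_insertPath : (insertPath x P).head? = some ({x} :: P) := by
  cases P <;> rfl

lemma getLast?_insertPath : (insertPath x P).getLast? = some (P ++ [{x}]) := by
  induction P with
  | nil => rfl
  | cons B R ih =>
    simp [insertPath, List.getLast?_cons, List.getLast?_map, ih]

lemma nodup_insertPath (hx : ∀ B ∈ P, x ∉ B) : (insertPath x P).Nodup := by
  induction P with
  | nil => simp [insertPath]
  | cons B R ih =>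
    have hxB : x ∉ B := hx B List.mem_cons_self
    have hxR : ∀ A ∈ R, x ∉ A := fun A hA => hx A (List.mem_cons_of_mem B hA)
    simp only [insertPath, List.nodup_cons, List.mem_cons, List.mem_map]
    refine ⟨?_, ?_, (ih hxR).map List.cons_injective⟩
    · rintro (h | ⟨Q, -, h⟩)
      · simpa using congrArg List.length h
      · exact hxB ((List.cons.inj h).1 ▸ Finset.mem_singleton_self x)
    · rintro ⟨Q, -, h⟩
      exact hxB ((List.cons.inj h).1 ▸ Finset.mem_insert_self x B)

def eraseFromBlocks (x : α) (Q : List (Finset α)) : List (Finset α) :=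
  (Q.map (·.erase x)).filter (·.Nonempty)

lemma eraseFromBlocks_append {L R : List (Finset α)} :
    eraseFromBlocks x (L ++ R) = eraseFromBlocks x L ++ eraseFromBlocks x R := by
  simp [eraseFromBlocks]

lemma IsOSPOn.eraseFromBlocks_eq (hP : IsOSPOn S P) (hx : x ∉ S) : eraseFromBlocks x P = P := by
  rw [eraseFromBlocks, List.map_congr_left fun B hB => Finset.erase_eq_of_notMem (hP.notMem hx hB),
    List.map_id', List.filter_eq_self]
  simpa using hP.nonempty

lemma IsInsertion.eraseFromBlocks_eq (h : IsInsertion x P Q) (hP : IsOSPOn S P) (hx : x ∉ S) :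
    eraseFromBlocks x Q = P := by
  rcases h with ⟨L, R, rfl, rfl⟩ | ⟨L, C, R, rfl, rfl⟩
  · simpa [eraseFromBlocks_append, eraseFromBlocks] using hP.eraseFromBlocks_eq hx
  · have hxC : x ∉ C := hP.notMem hx (by simp)
    simpa [eraseFromBlocks_append, eraseFromBlocks, Finset.erase_insert hxC,
      Finset.erase_eq_of_notMem hxC]
      using hP.eraseFromBlocks_eq hx

def orientedInsertPath (x : α) (b : Bool) (P : List (Finset α)) : List (List (Finset α)) :=
  if b then (insertPath x P).reverse else insertPath x P

lemma mem_orientedInsertPath : Q ∈ orientedInsertPath x b P ↔ IsInsertion x P Q := by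
  cases b <;> simp [orientedInsertPath, mem_insertPath]

lemma head?_orientedInsertPath :
    (orientedInsertPath x b P).head? = some (addEndBlock x (!b) P) := by
  cases b <;> simp [orientedInsertPath, addEndBlock, head?_insertPath, getLast?_insertPath]

lemma getLast?_orientedInsertPath :
    (orientedInsertPath x b P).getLast? = some (addEndBlock x b P) := by
  cases b <;> simp [orientedInsertPath, addEndBlock, head?_insertPath, getLast?_insertPath]

lemma nodup_orientedInsertPath (hx : ∀ B ∈ P, x ∉ B) : (orientedInsertPath x b P).Nodup := by
  cases b <;> simp [orientedInsertPath, nodup_insertPath hx]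

def zigzag (x : α) : Bool → List (List (Finset α)) → List (List (Finset α))
  | _, [] => []
  | b, P :: ps => orientedInsertPath x b P ++ zigzag x (!b) ps

lemma mem_zigzag : Q ∈ zigzag x b ps ↔ ∃ P ∈ ps, IsInsertion x P Q := by
  induction ps generalizing b with
  | nil => simp [zigzag]
  | cons P ps ih => simp [zigzag, mem_orientedInsertPath, ih]

lemma head?_zigzag : (zigzag x b ps).head? = ps.head?.map (addEndBlock x (!b)) := by
  cases ps with
  | nil => rfl
  | cons P ps => simp [zigzag, head?_orientedInsertPath]

-- The orientation `b'` of the final insertion path depends on the parity of `ps.length`.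
lemma exists_getLast?_zigzag :
    ∃ b', (zigzag x b ps).getLast? = ps.getLast?.map (addEndBlock x b') := by
  induction ps generalizing b with
  | nil => exact ⟨b, rfl⟩
  | cons P ps ih =>
    cases ps with
    | nil => exact ⟨b, by simp [zigzag, getLast?_orientedInsertPath]⟩
    | cons Q ps =>
      obtain ⟨b', hb'⟩ := @ih (!b)
      refine ⟨b', ?_⟩
      rw [zigzag, List.getLast?_append, hb', List.getLast?_cons_cons,
        List.getLast?_eq_some_getLast (List.cons_ne_nil Q ps)]
      rfl

lemma nodup_zigzag (hps : ps.Nodup) (hS : ∀ P ∈ ps, IsOSPOn S P) (hx : x ∉ S) :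
    (zigzag x b ps).Nodup := by
  induction ps generalizing b with
  | nil => simp [zigzag]
  | cons P ps ih =>
    have hP := hS P List.mem_cons_self
    rw [zigzag, List.nodup_append]
    refine ⟨nodup_orientedInsertPath fun B hB => hP.notMem hx hB,
      ih (List.nodup_cons.1 hps).2 fun P' hP' => hS P' (List.mem_cons_of_mem P hP'), ?_⟩
    rintro Q hQ Q' hQ' rfl
    obtain ⟨P', hP', hQP'⟩ := mem_zigzag.1 hQ'
    have hPP' : P = P' := by
      rw [← (mem_orientedInsertPath.1 hQ).eraseFromBlocks_eq hP hx,
        hQP'.eraseFromBlocks_eq (hS P' (List.mem_cons_of_mem P hP')) hx]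
    exact (List.nodup_cons.1 hps).1 (hPP' ▸ hP')

end OrderedSetPartition

section MergeStep

variable {n : ℕ} {P Q : List (Finset (Fin n))}

lemma MergeStep.cons (C : Finset (Fin n)) (h : MergeStep P Q) : MergeStep (C :: P) (C :: Q) := by
  obtain ⟨L, A, B, R, rfl, rfl⟩ := h
  exact ⟨C :: L, A, B, R, rfl, rfl⟩

lemma MergeStep.append (h : MergeStep P Q) (D : List (Finset (Fin n))) :
    MergeStep (P ++ D) (Q ++ D) := by
  obtain ⟨L, A, B, R, rfl, rfl⟩ := h
  exact ⟨L, A, B, R ++ D, by simp, by simp⟩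

lemma MergeStep.length_eq (h : MergeStep P Q) :
    P.length = Q.length + 1 := by
  obtain ⟨L, A, B, R, rfl, rfl⟩ := h
  simp only [List.length_append, List.length_cons]
  omega

end MergeStep

namespace OrderedSetPartition

variable {n : ℕ} {S : Finset (Fin n)} {P Q : List (Finset (Fin n))} {x : Fin n} {b : Bool}
  {ps : List (List (Finset (Fin n)))}

def MergeAdj (P Q : List (Finset (Fin n))) : Prop := MergeStep P Q ∨ MergeStep Q P

lemma MergeAdj.symm (h : MergeAdj P Q) : MergeAdj Q P := Or.symm h

lemma MergeAdj.cons (C : Finset (Fin n)) (h : MergeAdj P Q) : MergeAdj (C :: P) (C :: Q) :=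
  h.imp (MergeStep.cons C) (MergeStep.cons C)

lemma MergeAdj.append (h : MergeAdj P Q) (D : List (Finset (Fin n))) :
    MergeAdj (P ++ D) (Q ++ D) :=
  h.imp (MergeStep.append · D) (MergeStep.append · D)

lemma MergeAdj.addEndBlock (h : MergeAdj P Q) :
    MergeAdj (addEndBlock x b P) (addEndBlock x b Q) := by
  cases b
  · exact h.append _
  · exact h.cons _

lemma isChain_insertPath : (insertPath x P).IsChain MergeAdj := by
  induction P with
  | nil => simp [insertPath]
  | cons B R ih =>
    obtain ⟨Q, t, ht⟩ := List.exists_cons_of_ne_nil (insertPath_ne_nil (x := x) (P := R))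
    obtain rfl : Q = {x} :: R := by simpa [ht] using (head?_insertPath (x := x) (P := R))
    rw [insertPath, ht, List.map_cons]
    refine List.isChain_cons_cons.2 ⟨?_, List.isChain_cons_cons.2 ⟨?_, ?_⟩⟩
    · exact .inl ⟨[], {x}, B, R, rfl, by rw [← Finset.insert_eq]; rfl⟩
    · exact .inr ⟨[], B, {x}, R, rfl, by rw [Finset.union_comm, ← Finset.insert_eq]; rfl⟩
    · rw [← List.map_cons, ← ht]
      exact List.isChain_map_of_isChain _ (fun _ _ h => h.cons B) ih

lemma isChain_orientedInsertPath : (orientedInsertPath x b P).IsChain MergeAdj := by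
  cases b
  · exact isChain_insertPath
  · exact List.isChain_reverse.2 (isChain_insertPath.imp fun _ _ h => h.symm)

lemma isChain_zigzag (h : ps.IsChain MergeAdj) : (zigzag x b ps).IsChain MergeAdj := by
  induction ps generalizing b with
  | nil => simp [zigzag]
  | cons P ps ih =>
    rw [List.isChain_cons] at h
    rw [zigzag, List.isChain_append]
    refine ⟨isChain_orientedInsertPath, ih h.2, ?_⟩
    rw [getLast?_orientedInsertPath, head?_zigzag]
    simp only [Option.mem_def, Option.some.injEq, Option.map_eq_some_iff, Bool.not_not]
    rintro _ rfl _ ⟨P', hP', rfl⟩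
    exact (h.1 P' hP').addEndBlock

structure IsSpanningMergePath (S : Finset (Fin n)) (ps : List (List (Finset (Fin n)))) :
    Prop where
  mem_iff : ∀ P, P ∈ ps ↔ IsOSPOn S P
  nodup : ps.Nodup
  isChain : ps.IsChain MergeAdj
  head_isPermutation : ∀ P ∈ ps.head?, IsPermutation P
  getLast_isPermutation : ∀ P ∈ ps.getLast?, IsPermutation P

lemma IsSpanningMergePath.zigzag (h : IsSpanningMergePath S ps) (hx : x ∉ S) :
    IsSpanningMergePath (insert x S) (zigzag x false ps) where
  mem_iff Q := by
    rw [mem_zigzag, isOSPOn_insert_iff hx]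
    exact ⟨fun ⟨P, hP, hQ⟩ => ⟨P, (h.mem_iff P).1 hP, hQ⟩,
      fun ⟨P, hP, hQ⟩ => ⟨P, (h.mem_iff P).2 hP, hQ⟩⟩
  nodup := nodup_zigzag h.nodup (fun P hP => (h.mem_iff P).1 hP) hx
  isChain := isChain_zigzag h.isChain
  head_isPermutation Q hQ := by
    rw [head?_zigzag, Option.mem_map] at hQ
    obtain ⟨P, hP, rfl⟩ := hQ
    exact (h.head_isPermutation P hP).addEndBlock
  getLast_isPermutation Q hQ := by
    obtain ⟨b, hb⟩ := exists_getLast?_zigzag (x := x) (b := false) (ps := ps)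
    rw [hb, Option.mem_map] at hQ
    obtain ⟨P, hP, rfl⟩ := hQ
    exact (h.getLast_isPermutation P hP).addEndBlock

lemma exists_isSpanningMergePath (S : Finset (Fin n)) : ∃ ps, IsSpanningMergePath S ps := by
  induction S using Finset.induction_on with
  | empty =>
    refine ⟨[[]], ⟨fun P => ?_, by simp, by simp, ?_, ?_⟩⟩
    · rw [isOSPOn_empty_iff, List.mem_singleton]
    all_goals simp [IsPermutation]
  | insert x S hx ih =>
    obtain ⟨ps, hps⟩ := ih
    exact ⟨_, hps.zigzag hx⟩

lemma IsSpanningMergePath.two_le_length (h : IsSpanningMergePath S ps) (hS : 2 ≤ S.card) :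
    2 ≤ ps.length := by
  have hS₀ : S.Nonempty := Finset.card_pos.1 (by omega)
  have hsingle : [S] ∈ ps := (h.mem_iff [S]).2 <| isOSPOn_cons_iff.2
    ⟨hS₀, subset_rfl, by rw [Finset.sdiff_self]; exact isOSPOn_empty_iff.2 rfl⟩
  obtain ⟨P₀, rest, rfl⟩ := List.exists_cons_of_ne_nil (List.ne_nil_of_mem hsingle)
  have hP₀ : P₀ ≠ [S] := by
    rintro rfl
    have := h.head_isPermutation [S] rfl S List.mem_cons_self
    omega
  have : [S] ∈ rest := (List.mem_cons.1 hsingle).resolve_left (Ne.symm hP₀)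
  exact Nat.succ_le_succ (List.length_pos_of_mem this)

lemma permFaceGraph_adj_some {P Q : {P // IsOSP n P}} :
    (permFaceGraph n).Adj (some P) (some Q) ↔ MergeAdj P.1 Q.1 := by
  rw [permFaceGraph, SimpleGraph.fromRel_adj]
  refine ⟨fun h => h.2, fun h => ⟨?_, h⟩⟩
  rintro ⟨⟩
  rcases h with h | h <;> have := MergeStep.length_eq h <;> omega

lemma permFaceGraph_adj_none {P : {P // IsOSP n P}} :
    (permFaceGraph n).Adj (some P) none ↔ IsPermutation P.1 := by
  simp [permFaceGraph, permFaceRel, IsPermutation]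

theorem IsSpanningMergePath.exists_isHamiltonianCycle
    (h : IsSpanningMergePath Finset.univ ps) (hlen : 2 ≤ ps.length) :
    ∃ (v : Option {P // IsOSP n P}) (c : (permFaceGraph n).Walk v v), c.IsHamiltonianCycle := by
  have hosp : ∀ P ∈ ps, IsOSP n P := fun P hP => isOSPOn_univ_iff.1 ((h.mem_iff P).1 hP)
  have hne : ps ≠ [] := List.ne_nil_of_length_pos (by omega)
  set vs := ps.pmap (fun P hP => (some ⟨P, hP⟩ : Option {P // IsOSP n P})) hosp
  have hvs : vs ≠ [] := by simpa [vs] using hne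
  refine SimpleGraph.exists_isHamiltonianCycle_of_isChain (l := none :: vs) (List.cons_ne_nil _ _)
    ?_ ?_ ?_ ?_ (by simpa [vs] using hlen)
  · refine List.isChain_cons.2 ⟨?_, List.isChain_pmap_of_isChain
      (fun _ _ _ _ hPQ => permFaceGraph_adj_some.2 hPQ) h.isChain hosp⟩
    rw [List.head?_eq_some_head hvs]
    rintro _ ⟨⟩
    rw [List.head_pmap]
    exact (permFaceGraph_adj_none.2 (h.head_isPermutation _ (List.head_mem_head? hne))).symm
  · rw [List.getLast_cons hvs, List.getLast_pmap]
    exact permFaceGraph_adj_none.2 (h.getLast_isPermutation _ (List.getLast_mem_getLast? hne))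
  · refine List.nodup_cons.2 ⟨by simp [vs], h.nodup.pmap fun P _ Q _ hPQ => ?_⟩
    simpa using hPQ
  · rintro (_ | P)
    · exact List.mem_cons_self
    · exact List.mem_cons_of_mem _
        (List.mem_pmap.2 ⟨P.1, (h.mem_iff _).2 (isOSPOn_univ_iff.2 P.2), rfl⟩)

end OrderedSetPartition

/-- For every `n ≥ 2`, the cover graph of the face lattice of the permutahedron `Π_n`
has a Hamiltonian cycle. -/
theorem permFaceGraph_hamiltonian_cycle (n : ℕ) (hn : 2 ≤ n) :
    ∃ (v : Option {P : List (Finset (Fin n)) // IsOSP n P})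
      (c : (permFaceGraph n).Walk v v), c.IsHamiltonianCycle := by
  obtain ⟨ps, hps⟩ :=
    OrderedSetPartition.exists_isSpanningMergePath (Finset.univ : Finset (Fin n))
  exact hps.exists_isHamiltonianCycle (hps.two_le_length (by simpa using hn))
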